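/- For all integers 0 ≤ k ≤ j, the following identity holds in ℚ(q, a): ∑_{h=k}^{j} (−q)^{h−j} q^{k²} [h; k]_+ · a^{−j} q^{j²+h²} [j; h]_+ · (a² q^{2−2j−2h}; q²)_j / (q²;q²)_j = (−q)^{k−j} a^{−j} q^{2k²+j²} [j; k]_+ · (a² q^{2−2j−2k}; q²)_k / (q²;q²)_k. (This is the identity expressing that the reduced numerator closure of a top twist applied to the basis web UP[j,k] in the j-colored HOMFLY-PT skein theory equals the stated closed form.) -/

import Mathlib

noncomputable section

open Finset

/-- The field `ℚ(q, a)` of rational functions in two variables. -/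
abbrev F : Type := FractionRing (MvPolynomial (Fin 2) ℚ)

/-- The variable `q`. -/
def q : F := algebraMap (MvPolynomial (Fin 2) ℚ) F (MvPolynomial.X 0)

/-- The variable `a`. -/
def a : F := algebraMap (MvPolynomial (Fin 2) ℚ) F (MvPolynomial.X 1)

/-- The q-Pochhammer symbol `(x; y)_n = ∏_{j=0}^{n-1} (1 - x yʲ)`. -/
def qPoch (x y : F) (n : ℕ) : F := ∏ i ∈ Finset.range n, (1 - x * y ^ i)

/-- `(q²;q²)_m = ∏_{i=1}^{m} (1 - q^{2i})`. -/
def qp (m : ℕ) : F := qPoch (q ^ 2) (q ^ 2) m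

/-- The positive quantum binomial coefficient `[N; k]₊`. -/
def qbin (N k : ℕ) : F := qp N / (qp k * qp (N - k))

/-!
Write `t = q²`, `j = k + d`, `h = k + m` and `z = a² q^{2-2j-2k}`. Since
`[h;k]₊ [j;h]₊ = [j;k]₊ [d;m]₊`, the sum is a prefactor times
`∑ₘ (-t^{k+1})^m t^{C(m,2)} [d;m]₊ (z t^{-m}; t)_j`. Expanding `(z t^{-m}; t)_j` by the
q-binomial theorem and exchanging the sums, the sum over `m` is again a q-binomial expansion,
of `(t^{k+1-i}; t)_d`. This vanishes for `k < i ≤ j`, and for `i ≤ k` one has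
`[j;i]₊ (t^{k+1-i}; t)_d = [k;i]₊ (t^{k+1}; t)_d`, so what remains is
`(z; t)_k (t^{k+1}; t)_d = (z; t)_k (t; t)_j / (t; t)_k`.
-/

lemma q_ne_zero : q ≠ 0 := by
  simp only [q, ne_eq, map_eq_zero_iff _ (IsFractionRing.injective (MvPolynomial (Fin 2) ℚ) F)]
  exact MvPolynomial.X_ne_zero 0

lemma one_sub_q_pow_ne_zero {n : ℕ} (hn : n ≠ 0) : (1 : F) - q ^ n ≠ 0 := by
  have hmap : (1 : F) - q ^ n =
      algebraMap (MvPolynomial (Fin 2) ℚ) F (1 - MvPolynomial.X 0 ^ n) := by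
    simp [q]
  rw [hmap, ne_eq, map_eq_zero_iff _ (IsFractionRing.injective (MvPolynomial (Fin 2) ℚ) F)]
  intro h
  have := congrArg MvPolynomial.constantCoeff h
  simp [hn] at this

lemma qp_ne_zero (m : ℕ) : qp m ≠ 0 := by
  rw [qp, qPoch]
  refine prod_ne_zero_iff.2 fun i _ => ?_
  rw [← pow_succ', ← pow_mul]
  exact one_sub_q_pow_ne_zero (by omega)

lemma qPoch_succ' (x y : F) (n : ℕ) : qPoch x y (n + 1) = (1 - x) * qPoch (x * y) y n := by
  rw [qPoch, qPoch, prod_range_succ', mul_comm]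
  simp only [pow_zero, mul_one, pow_succ', mul_assoc]

lemma qPoch_eq_zero_of_mul_pow_eq_one {x y : F} {n d : ℕ} (hn : n < d) (h : x * y ^ n = 1) :
    qPoch x y d = 0 :=
  prod_eq_zero (mem_range.2 hn) (by rw [h, sub_self])

lemma qPoch_add (x y : F) (s d : ℕ) :
    qPoch x y (s + d) = qPoch x y s * qPoch (x * y ^ s) y d := by
  rw [qPoch, qPoch, qPoch, prod_range_add]
  simp only [pow_add, mul_assoc]

lemma qp_zero : qp 0 = 1 := by simp [qp, qPoch]

lemma qp_succ (n : ℕ) : qp (n + 1) = qp n * (1 - (q ^ 2) ^ (n + 1)) := by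
  rw [qp, qp, qPoch, prod_range_succ, ← pow_succ']
  rfl

lemma qp_add (s d : ℕ) : qp (s + d) = qp s * qPoch ((q ^ 2) ^ (s + 1)) (q ^ 2) d := by
  rw [qp, qPoch_add, ← pow_succ']
  rfl

lemma qPoch_pow_succ_eq_div (s d : ℕ) :
    qPoch ((q ^ 2) ^ (s + 1)) (q ^ 2) d = qp (s + d) / qp s := by
  rw [qp_add, mul_div_cancel_left₀ _ (qp_ne_zero s)]

lemma qbin_zero (n : ℕ) : qbin n 0 = 1 := by
  rw [qbin, qp_zero, one_mul, Nat.sub_zero, div_self (qp_ne_zero n)]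

lemma qbin_self (n : ℕ) : qbin n n = 1 := by
  rw [qbin, Nat.sub_self, qp_zero, mul_one, div_self (qp_ne_zero n)]

lemma qbin_mul_qbin {n h k : ℕ} (hkh : k ≤ h) (hhn : h ≤ n) :
    qbin n h * qbin h k = qbin n k * qbin (n - k) (h - k) := by
  obtain ⟨m, rfl⟩ := Nat.exists_eq_add_of_le hkh
  obtain ⟨e, rfl⟩ := Nat.exists_eq_add_of_le hhn
  simp only [qbin, show k + m + e - (k + m) = e by omega, show k + m + e - k = m + e by omega,
    Nat.add_sub_cancel_left]
  field_simp [qp_ne_zero]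

lemma qbin_add_mul_qPoch {i k : ℕ} (hik : i ≤ k) (d : ℕ) :
    qbin (k + d) i * qPoch ((q ^ 2) ^ (k + 1) * (q ^ 2)⁻¹ ^ i) (q ^ 2) d =
      qbin k i * qPoch ((q ^ 2) ^ (k + 1)) (q ^ 2) d := by
  obtain ⟨s, rfl⟩ := Nat.exists_eq_add_of_le hik
  have hshift : (q ^ 2) ^ (i + s + 1) * (q ^ 2)⁻¹ ^ i = (q ^ 2 : F) ^ (s + 1) := by
    rw [inv_pow, show i + s + 1 = s + 1 + i by omega, pow_add,
      mul_inv_cancel_right₀ (pow_ne_zero _ (pow_ne_zero _ q_ne_zero))]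
  rw [hshift, qPoch_pow_succ_eq_div, qPoch_pow_succ_eq_div]
  simp only [qbin, show i + s + d - i = s + d by omega, Nat.add_sub_cancel_left]
  field_simp [qp_ne_zero]

/-- `[n; m]₊` extended by zero to `m > n`, where `qbin n m = qp n / qp m` is not. -/
def qbin₀ (n m : ℕ) : F := if m ≤ n then qbin n m else 0

lemma qbin₀_of_le {n m : ℕ} (h : m ≤ n) : qbin₀ n m = qbin n m := if_pos h

lemma qbin₀_of_lt {n m : ℕ} (h : n < m) : qbin₀ n m = 0 := if_neg (by omega)

lemma qbin₀_succ_succ (n m : ℕ) :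
    qbin₀ (n + 1) (m + 1) = qbin₀ n m + (q ^ 2) ^ (m + 1) * qbin₀ n (m + 1) := by
  rcases lt_trichotomy m n with hmn | rfl | hnm
  · obtain ⟨r, rfl⟩ := Nat.exists_eq_add_of_lt hmn
    rw [qbin₀_of_le (by omega), qbin₀_of_le (by omega), qbin₀_of_le (by omega)]
    simp only [qbin, show m + r + 1 + 1 - (m + 1) = r + 1 by omega,
      show m + r + 1 - m = r + 1 by omega, show m + r + 1 - (m + 1) = r by omega]
    have hm : (1 : F) - (q ^ 2) ^ (m + 1) ≠ 0 := by
      rw [← pow_mul]; exact one_sub_q_pow_ne_zero (by omega)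
    have hr : (1 : F) - (q ^ 2) ^ (r + 1) ≠ 0 := by
      rw [← pow_mul]; exact one_sub_q_pow_ne_zero (by omega)
    rw [qp_succ (m + r + 1), qp_succ m, qp_succ r]
    have hpm := qp_ne_zero m
    have hpr := qp_ne_zero r
    generalize q ^ 2 = t at *
    field_simp
    ring
  · rw [qbin₀_of_le le_rfl, qbin₀_of_le le_rfl, qbin₀_of_lt (by omega), qbin_self, qbin_self]
    ring
  · rw [qbin₀_of_lt (by omega), qbin₀_of_lt hnm, qbin₀_of_lt (by omega)]
    ring

lemma choose_two_succ (m : ℕ) : (m + 1).choose 2 = m.choose 2 + m := by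
  rw [Nat.choose_succ_succ', Nat.choose_one_right, add_comm]

lemma sq_eq_add_two_mul_choose_two (m : ℕ) : m ^ 2 = m + 2 * m.choose 2 := by
  induction m with
  | zero => rfl
  | succ m ih => rw [choose_two_succ]; linear_combination ih

theorem qPoch_eq_sum_qbin₀ (x : F) (n : ℕ) :
    qPoch x (q ^ 2) n =
      ∑ m ∈ range (n + 1), (-x) ^ m * (q ^ 2) ^ m.choose 2 * qbin₀ n m := by
  induction n generalizing x with
  | zero => simp [qPoch, qbin₀_of_le, qbin_zero]
  | succ n ih =>
    set S := ∑ m ∈ range (n + 1), (-(x * q ^ 2)) ^ m * (q ^ 2) ^ m.choose 2 * qbin₀ n m with hS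
    have hshift : S = ∑ m ∈ range (n + 1),
          (-x) ^ (m + 1) * (q ^ 2) ^ (m.choose 2 + m) * ((q ^ 2) ^ (m + 1) * qbin₀ n (m + 1)) +
        1 := by
      rw [← add_zero S, ← mul_eq_zero_of_right _ (qbin₀_of_lt n.lt_succ_self), ← sum_range_succ,
        sum_range_succ', qbin₀_of_le (Nat.zero_le n), qbin_zero]
      simp only [choose_two_succ]
      refine congrArg₂ _ (sum_congr rfl fun m _ => by ring) (by simp)
    have hmul : ∑ m ∈ range (n + 1), (-x) ^ (m + 1) * (q ^ 2) ^ (m.choose 2 + m) * qbin₀ n m =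
        -(x * S) := by
      rw [mul_sum, ← sum_neg_distrib]
      exact sum_congr rfl fun m _ => by ring
    rw [qPoch_succ', ih, ← hS, sum_range_succ' _ (n + 1), qbin₀_of_le (Nat.zero_le _), qbin_zero]
    simp only [qbin₀_succ_succ, choose_two_succ, mul_add, sum_add_distrib, hmul, pow_zero,
      Nat.choose_zero_succ]
    linear_combination hshift

theorem qPoch_eq_sum_qbin (x : F) (n : ℕ) :
    qPoch x (q ^ 2) n = ∑ m ∈ range (n + 1), (-x) ^ m * (q ^ 2) ^ m.choose 2 * qbin n m := by
  rw [qPoch_eq_sum_qbin₀]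
  exact sum_congr rfl fun m hm => by rw [qbin₀_of_le (Nat.lt_succ_iff.1 (mem_range.1 hm))]

theorem sum_qbin_mul_qPoch_shift (z : F) (k d : ℕ) :
    ∑ m ∈ range (d + 1), (-(q ^ 2) ^ (k + 1)) ^ m * (q ^ 2) ^ m.choose 2 * qbin d m *
        qPoch (z * (q ^ 2)⁻¹ ^ m) (q ^ 2) (k + d) =
      qPoch z (q ^ 2) k * qPoch ((q ^ 2) ^ (k + 1)) (q ^ 2) d := by
  set c : ℕ → F := fun i => (-z) ^ i * (q ^ 2) ^ i.choose 2
  calc _ = ∑ m ∈ range (d + 1), ∑ i ∈ range (k + d + 1), c i * qbin (k + d) i *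
          ((-((q ^ 2) ^ (k + 1) * (q ^ 2)⁻¹ ^ i)) ^ m * (q ^ 2) ^ m.choose 2 * qbin d m) := by
        refine sum_congr rfl fun m _ => ?_
        rw [qPoch_eq_sum_qbin, mul_sum]
        exact sum_congr rfl fun i _ => by ring
    _ = ∑ i ∈ range (k + d + 1), c i * qbin (k + d) i *
          qPoch ((q ^ 2) ^ (k + 1) * (q ^ 2)⁻¹ ^ i) (q ^ 2) d := by
        rw [sum_comm]
        simp only [← mul_sum, qPoch_eq_sum_qbin]
    _ = ∑ i ∈ range (k + 1), c i * qbin (k + d) i *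
          qPoch ((q ^ 2) ^ (k + 1) * (q ^ 2)⁻¹ ^ i) (q ^ 2) d := by
        -- for `k < i ≤ k + d` the factor of index `i - k - 1` is `1 - q^{2(k+1-i)} q^{2(i-k-1)}`
        rw [show k + d + 1 = k + 1 + d by omega, sum_range_add, add_eq_left]
        refine sum_eq_zero fun t ht => ?_
        rw [qPoch_eq_zero_of_mul_pow_eq_one (mem_range.1 ht), mul_zero]
        rw [inv_pow, mul_right_comm, ← pow_add]
        exact mul_inv_cancel₀ (pow_ne_zero _ (pow_ne_zero _ q_ne_zero))
    _ = ∑ i ∈ range (k + 1), c i * qbin k i * qPoch ((q ^ 2) ^ (k + 1)) (q ^ 2) d := by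
        refine sum_congr rfl fun i hi => ?_
        rw [mul_assoc (c i), qbin_add_mul_qPoch (Nat.lt_succ_iff.1 (mem_range.1 hi)), ← mul_assoc]
    _ = _ := by rw [qPoch_eq_sum_qbin z k, sum_mul]

lemma closure_term_eq {k d m : ℕ} (hmd : m ≤ d) :
    (-q) ^ (((k + m : ℕ) : ℤ) - ((k + d : ℕ) : ℤ)) * q ^ (k ^ 2) * qbin (k + m) k *
        (a ^ (-((k + d : ℕ) : ℤ)) * q ^ ((k + d) ^ 2 + (k + m) ^ 2) * qbin (k + d) (k + m) *
          (qPoch (a ^ 2 * q ^ (2 - 2 * ((k + d : ℕ) : ℤ) - 2 * ((k + m : ℕ) : ℤ))) (q ^ 2) (k + d) /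
            qp (k + d))) =
      (-q) ^ ((k : ℤ) - ((k + d : ℕ) : ℤ)) * a ^ (-((k + d : ℕ) : ℤ)) *
          q ^ (2 * k ^ 2 + (k + d) ^ 2) * qbin (k + d) k / qp (k + d) *
        ((-(q ^ 2) ^ (k + 1)) ^ m * (q ^ 2) ^ m.choose 2 * qbin d m *
          qPoch (a ^ 2 * q ^ (2 - 2 * ((k + d : ℕ) : ℤ) - 2 * (k : ℤ)) * (q ^ 2)⁻¹ ^ m) (q ^ 2)
            (k + d)) := by
  have hsign : (-q) ^ (((k + m : ℕ) : ℤ) - ((k + d : ℕ) : ℤ)) =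
      (-q) ^ ((k : ℤ) - ((k + d : ℕ) : ℤ)) * (-q) ^ m := by
    rw [← zpow_natCast, ← zpow_add₀ (neg_ne_zero.2 q_ne_zero)]
    push_cast; ring_nf
  have hshift : q ^ (2 - 2 * ((k + d : ℕ) : ℤ) - 2 * ((k + m : ℕ) : ℤ)) =
      q ^ (2 - 2 * ((k + d : ℕ) : ℤ) - 2 * (k : ℤ)) * (q ^ 2)⁻¹ ^ m := by
    rw [inv_pow, ← pow_mul, ← zpow_natCast q (2 * m), ← zpow_neg, ← zpow_add₀ q_ne_zero]
    push_cast; ring_nf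
  have hbin : qbin (k + m) k * qbin (k + d) (k + m) = qbin (k + d) k * qbin d m := by
    rw [mul_comm, qbin_mul_qbin (Nat.le_add_right k m) (by omega), Nat.add_sub_cancel_left,
      Nat.add_sub_cancel_left]
  have hpow : (-q) ^ m * q ^ ((k + m) ^ 2) =
      q ^ (k ^ 2) * ((-(q ^ 2) ^ (k + 1)) ^ m * (q ^ 2) ^ m.choose 2) := by
    rw [add_sq, sq_eq_add_two_mul_choose_two m]
    ring
  rw [hsign, hshift, ← mul_assoc (a ^ 2)]
  set z := a ^ 2 * q ^ (2 - 2 * ((k + d : ℕ) : ℤ) - 2 * (k : ℤ))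
  linear_combination
    ((-q) ^ ((k : ℤ) - ((k + d : ℕ) : ℤ)) * a ^ (-((k + d : ℕ) : ℤ)) * q ^ (k ^ 2 + (k + d) ^ 2) *
      qPoch (z * (q ^ 2)⁻¹ ^ m) (q ^ 2) (k + d) / qp (k + d)) *
    (qbin (k + m) k * qbin (k + d) (k + m) * hpow +
      q ^ (k ^ 2) * ((-(q ^ 2) ^ (k + 1)) ^ m * (q ^ 2) ^ m.choose 2) * hbin)

/-- The reduced closure of a top twist on `UP[j,k]` (Lemma `lemmaclosure`):
`∑_{h=k}^{j} (−q)^{h−j} q^{k²} [h;k]₊ · a^{−j} q^{j²+h²} [j;h]₊ · (a²q^{2−2j−2h};q²)_j/(q²;q²)_j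
 = (−q)^{k−j} a^{−j} q^{2k²+j²} [j;k]₊ · (a²q^{2−2j−2k};q²)_k/(q²;q²)_k`. -/
theorem closure_TUP (j k : ℕ) (hk : k ≤ j) :
    ∑ h ∈ Finset.Icc k j,
      (-q) ^ ((h : ℤ) - (j : ℤ)) * q ^ (k ^ 2) * qbin h k *
        (a ^ (-(j : ℤ)) * q ^ (j ^ 2 + h ^ 2) * qbin j h *
          (qPoch (a ^ 2 * q ^ (2 - 2 * (j : ℤ) - 2 * (h : ℤ))) (q ^ 2) j / qp j)) =
      (-q) ^ ((k : ℤ) - (j : ℤ)) * a ^ (-(j : ℤ)) * q ^ (2 * k ^ 2 + j ^ 2) * qbin j k *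
        (qPoch (a ^ 2 * q ^ (2 - 2 * (j : ℤ) - 2 * (k : ℤ))) (q ^ 2) k / qp k) := by
  obtain ⟨d, rfl⟩ := Nat.exists_eq_add_of_le hk
  rw [← Ico_add_one_right_eq_Icc, sum_Ico_eq_sum_range, show k + d + 1 - k = d + 1 by omega,
    sum_congr rfl fun m hm => closure_term_eq (Nat.lt_succ_iff.1 (mem_range.1 hm)), ← mul_sum,
    sum_qbin_mul_qPoch_shift, qp_add]
  have hqp := qp_ne_zero k
  have hP := right_ne_zero_of_mul (qp_add k d ▸ qp_ne_zero (k + d))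
  field_simp
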